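/- arXiv:2308.08358 — 2 statements merged into one kernel-verified Lean document; each statement's English description precedes it below -/
import Mathlib

section
/- Suppose ‖A₁‖ ≤ R, ‖A₂‖ ≤ R. Then for all x, y ∈ ℝ^d with ‖x‖₂ ≤ R and ‖y‖₂ ≤ R, |α(x) − α(y)| ≤ R² m √(nd) exp(R³) · ‖x − y‖₂. -/
open Matrix BigOperators

noncomputable section

/-- entrywise ReLU on a Euclidean vector -/
def relu {k : ℕ} (x : EuclideanSpace ℝ (Fin k)) : EuclideanSpace ℝ (Fin k) :=
  WithLp.toLp 2 (fun i => max 0 (x i))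

/-- entrywise exponential on a Euclidean vector -/
def vexp {k : ℕ} (x : EuclideanSpace ℝ (Fin k)) : EuclideanSpace ℝ (Fin k) :=
  WithLp.toLp 2 (fun i => Real.exp (x i))

/-- matrix-vector product as a map between Euclidean spaces -/
def mulE {k l : ℕ} (A : Matrix (Fin k) (Fin l) ℝ) (x : EuclideanSpace ℝ (Fin l)) :
    EuclideanSpace ℝ (Fin k) :=
  WithLp.toLp 2 (fun i => ∑ j, A i j * x j)

/-- ℓ²-operator norm of a matrix -/
def opNorm {k l : ℕ} (A : Matrix (Fin k) (Fin l) ℝ) : ℝ :=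
  ‖LinearMap.toContinuousLinearMap (Matrix.toEuclideanLin A)‖

/-- indicator of positivity, entrywise: the vector 1[y > 0] -/
def ind {k : ℕ} (y : EuclideanSpace ℝ (Fin k)) : Fin k → ℝ :=
  fun i => if 0 < y i then 1 else 0

variable {n m d : ℕ}

/-- h(x) = φ(A₁ x) -/
def hfun (A₁ : Matrix (Fin n) (Fin d) ℝ) (x : EuclideanSpace ℝ (Fin d)) :
    EuclideanSpace ℝ (Fin n) := relu (mulE A₁ x)

/-- u(x) = exp(A₂ φ(A₁ x)) -/
def ufun (A₁ : Matrix (Fin n) (Fin d) ℝ) (A₂ : Matrix (Fin m) (Fin n) ℝ)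
    (x : EuclideanSpace ℝ (Fin d)) : EuclideanSpace ℝ (Fin m) :=
  vexp (mulE A₂ (hfun A₁ x))

/-- α(x) = ⟨u(x), 1_m⟩ -/
def afun (A₁ : Matrix (Fin n) (Fin d) ℝ) (A₂ : Matrix (Fin m) (Fin n) ℝ)
    (x : EuclideanSpace ℝ (Fin d)) : ℝ :=
  ∑ i, ufun A₁ A₂ x i

/-- f(x) = α(x)⁻¹ • u(x) -/
def ffun (A₁ : Matrix (Fin n) (Fin d) ℝ) (A₂ : Matrix (Fin m) (Fin n) ℝ)
    (x : EuclideanSpace ℝ (Fin d)) : EuclideanSpace ℝ (Fin m) :=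
  (afun A₁ A₂ x)⁻¹ • ufun A₁ A₂ x

/-- c(x) = f(x) - b -/
def cfun (A₁ : Matrix (Fin n) (Fin d) ℝ) (A₂ : Matrix (Fin m) (Fin n) ℝ)
    (b : EuclideanSpace ℝ (Fin m)) (x : EuclideanSpace ℝ (Fin d)) :
    EuclideanSpace ℝ (Fin m) :=
  ffun A₁ A₂ x - b

/-- the matrix B(x) appearing in the decomposition of the Hessian -/
def Bmat (A₁ : Matrix (Fin n) (Fin d) ℝ) (A₂ : Matrix (Fin m) (Fin n) ℝ)
    (b : EuclideanSpace ℝ (Fin m)) (x : EuclideanSpace ℝ (Fin d)) :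
    Matrix (Fin m) (Fin m) ℝ :=
  Matrix.diagonal (fun i => ffun A₁ A₂ x i * (ffun A₁ A₂ x i + cfun A₁ A₂ b x i))
  - Matrix.diagonal (fun i => ffun A₁ A₂ x i)
      * Matrix.vecMulVec (fun i => cfun A₁ A₂ b x i + ffun A₁ A₂ x i) (fun i => ffun A₁ A₂ x i)
  - Matrix.vecMulVec (fun i => ffun A₁ A₂ x i) (fun i => cfun A₁ A₂ b x i + ffun A₁ A₂ x i)
      * Matrix.diagonal (fun i => ffun A₁ A₂ x i)
  + (∑ i, (2 * cfun A₁ A₂ b x i + ffun A₁ A₂ x i) * ffun A₁ A₂ x i)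
      • Matrix.vecMulVec (fun i => ffun A₁ A₂ x i) (fun i => ffun A₁ A₂ x i)
  - (∑ i, cfun A₁ A₂ b x i * ffun A₁ A₂ x i)
      • Matrix.diagonal (fun i => ffun A₁ A₂ x i)

-- auxiliary lemmas
lemma coord_abs_le_norm {k : ℕ} (v : EuclideanSpace ℝ (Fin k)) (i : Fin k) : |v i| ≤ ‖v‖ := by
  rw [EuclideanSpace.norm_eq, ← Real.sqrt_sq_eq_abs]
  apply Real.sqrt_le_sqrt
  have : (v i)^2 = ‖v i‖^2 := by rw [Real.norm_eq_abs, sq_abs]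
  rw [this]
  exact Finset.single_le_sum (f := fun j => ‖v j‖^2) (fun j _ => sq_nonneg _) (Finset.mem_univ i)

lemma mulE_eq_clm {k l : ℕ} (A : Matrix (Fin k) (Fin l) ℝ) (v : EuclideanSpace ℝ (Fin l)) :
    mulE A v = (LinearMap.toContinuousLinearMap (Matrix.toEuclideanLin A)) v := by
  ext i
  simp [mulE, Matrix.toEuclideanLin_apply, Matrix.mulVec, dotProduct]

lemma mulE_norm_le {k l : ℕ} (A : Matrix (Fin k) (Fin l) ℝ) (v : EuclideanSpace ℝ (Fin l)) :
    ‖mulE A v‖ ≤ opNorm A * ‖v‖ := by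
  rw [mulE_eq_clm, opNorm]
  exact ContinuousLinearMap.le_opNorm _ _

lemma mulE_sub {k l : ℕ} (A : Matrix (Fin k) (Fin l) ℝ) (u v : EuclideanSpace ℝ (Fin l)) :
    mulE A u - mulE A v = mulE A (u - v) := by
  rw [mulE_eq_clm, mulE_eq_clm, mulE_eq_clm, ← map_sub]

lemma relu_lip {k : ℕ} (u v : EuclideanSpace ℝ (Fin k)) : ‖relu u - relu v‖ ≤ ‖u - v‖ := by
  rw [EuclideanSpace.norm_eq, EuclideanSpace.norm_eq]
  apply Real.sqrt_le_sqrt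
  apply Finset.sum_le_sum
  intro i _
  have h1 : (relu u - relu v) i = max (u i) 0 - max (v i) 0 := by
    simp [relu, max_comm]
  have h2 : (u - v) i = u i - v i := rfl
  rw [h1, h2, Real.norm_eq_abs, Real.norm_eq_abs]
  exact pow_le_pow_left₀ (abs_nonneg _) (abs_max_sub_max_le_abs (u i) (v i) 0) 2

lemma relu_norm_le {k : ℕ} (u : EuclideanSpace ℝ (Fin k)) : ‖relu u‖ ≤ ‖u‖ := by
  have h0 : relu (0 : EuclideanSpace ℝ (Fin k)) = 0 := by
    ext i; simp [relu]
  have := relu_lip u (0 : EuclideanSpace ℝ (Fin k))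
  simpa [h0] using this

lemma exp_lip {a b M : ℝ} (ha : a ≤ M) (hb : b ≤ M) :
    |Real.exp a - Real.exp b| ≤ Real.exp M * |a - b| := by
  wlog hab : b ≤ a generalizing a b
  · rw [abs_sub_comm, abs_sub_comm a b]
    exact this hb ha (le_of_not_ge hab)
  have h1 : Real.exp a - Real.exp b ≤ Real.exp a * (a - b) := by
    have := Real.add_one_le_exp (b - a)
    have h2 : Real.exp b = Real.exp a * Real.exp (b - a) := by
      rw [← Real.exp_add]; ring_nf
    nlinarith [Real.exp_pos a]
  rw [abs_of_nonneg (sub_nonneg.mpr hab),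
      abs_of_nonneg (sub_nonneg.mpr (Real.exp_le_exp.mpr hab))]
  calc Real.exp a - Real.exp b ≤ Real.exp a * (a - b) := h1
    _ ≤ Real.exp M * (a - b) := by
        apply mul_le_mul_of_nonneg_right (Real.exp_le_exp.mpr ha) (by linarith)

/-- if ‖A₁‖ ≤ R, ‖A₂‖ ≤ R then for all x, y in the radius-R ball,
|α(x) − α(y)| ≤ R² m √(nd) exp(R³) ‖x − y‖₂. -/
theorem statement7 (n m d : ℕ) (hn : 0 < n) (hm : 0 < m) (hd : 0 < d) (R : ℝ)
    (A₁ : Matrix (Fin n) (Fin d) ℝ) (A₂ : Matrix (Fin m) (Fin n) ℝ)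
    (hA₁ : opNorm A₁ ≤ R) (hA₂ : opNorm A₂ ≤ R) :
    ∀ x y : EuclideanSpace ℝ (Fin d), ‖x‖ ≤ R → ‖y‖ ≤ R →
      |afun A₁ A₂ x - afun A₁ A₂ y| ≤
        R ^ 2 * (m : ℝ) * Real.sqrt ((n : ℝ) * d) * Real.exp (R ^ 3) * ‖x - y‖ := by
  intro x y hx hy
  have hR0 : 0 ≤ R := le_trans (norm_nonneg x) hx
  have hxh : ‖hfun A₁ x‖ ≤ R * R := by
    calc ‖hfun A₁ x‖ ≤ ‖mulE A₁ x‖ := relu_norm_le _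
      _ ≤ opNorm A₁ * ‖x‖ := mulE_norm_le _ _
      _ ≤ R * R := mul_le_mul hA₁ hx (norm_nonneg x) hR0
  have hyh : ‖hfun A₁ y‖ ≤ R * R := by
    calc ‖hfun A₁ y‖ ≤ ‖mulE A₁ y‖ := relu_norm_le _
      _ ≤ opNorm A₁ * ‖y‖ := mulE_norm_le _ _
      _ ≤ R * R := mul_le_mul hA₁ hy (norm_nonneg y) hR0
  set a := mulE A₂ (hfun A₁ x) with ha
  set b := mulE A₂ (hfun A₁ y) with hb
  have haM : ∀ i, a i ≤ R ^ 3 := by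
    intro i
    calc a i ≤ |a i| := le_abs_self _
      _ ≤ ‖a‖ := coord_abs_le_norm _ _
      _ ≤ opNorm A₂ * ‖hfun A₁ x‖ := mulE_norm_le _ _
      _ ≤ R * (R * R) := mul_le_mul hA₂ hxh (norm_nonneg _) hR0
      _ = R ^ 3 := by ring
  have hbM : ∀ i, b i ≤ R ^ 3 := by
    intro i
    calc b i ≤ |b i| := le_abs_self _
      _ ≤ ‖b‖ := coord_abs_le_norm _ _
      _ ≤ opNorm A₂ * ‖hfun A₁ y‖ := mulE_norm_le _ _
      _ ≤ R * (R * R) := mul_le_mul hA₂ hyh (norm_nonneg _) hR0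
      _ = R ^ 3 := by ring
  have habnorm : ‖a - b‖ ≤ R * R * ‖x - y‖ := by
    rw [ha, hb, mulE_sub]
    calc ‖mulE A₂ (hfun A₁ x - hfun A₁ y)‖
        ≤ opNorm A₂ * ‖hfun A₁ x - hfun A₁ y‖ := mulE_norm_le _ _
      _ ≤ R * ‖hfun A₁ x - hfun A₁ y‖ :=
          mul_le_mul_of_nonneg_right hA₂ (norm_nonneg _)
      _ ≤ R * ‖mulE A₁ x - mulE A₁ y‖ :=
          mul_le_mul_of_nonneg_left (relu_lip _ _) hR0
      _ = R * ‖mulE A₁ (x - y)‖ := by rw [mulE_sub]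
      _ ≤ R * (opNorm A₁ * ‖x - y‖) :=
          mul_le_mul_of_nonneg_left (mulE_norm_le _ _) hR0
      _ ≤ R * (R * ‖x - y‖) := by
          apply mul_le_mul_of_nonneg_left _ hR0
          exact mul_le_mul_of_nonneg_right hA₁ (norm_nonneg _)
      _ = R * R * ‖x - y‖ := by ring
  have key : |afun A₁ A₂ x - afun A₁ A₂ y| ≤
      (m : ℝ) * (Real.exp (R ^ 3) * (R * R * ‖x - y‖)) := by
    have h1 : afun A₁ A₂ x - afun A₁ A₂ y = ∑ i, (Real.exp (a i) - Real.exp (b i)) := by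
      rw [afun, afun, ← Finset.sum_sub_distrib]
      congr 1
    rw [h1]
    calc |∑ i, (Real.exp (a i) - Real.exp (b i))|
        ≤ ∑ i, |Real.exp (a i) - Real.exp (b i)| := Finset.abs_sum_le_sum_abs _ _
      _ ≤ ∑ _i : Fin m, Real.exp (R ^ 3) * (R * R * ‖x - y‖) := by
          apply Finset.sum_le_sum
          intro i _
          calc |Real.exp (a i) - Real.exp (b i)|
              ≤ Real.exp (R ^ 3) * |a i - b i| := exp_lip (haM i) (hbM i)
            _ ≤ Real.exp (R ^ 3) * ‖a - b‖ := by
                apply mul_le_mul_of_nonneg_left _ (Real.exp_pos _).le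
                have h2 : a i - b i = (a - b) i := rfl
                rw [h2]; exact coord_abs_le_norm _ _
            _ ≤ Real.exp (R ^ 3) * (R * R * ‖x - y‖) :=
                mul_le_mul_of_nonneg_left habnorm (Real.exp_pos _).le
      _ = (m : ℝ) * (Real.exp (R ^ 3) * (R * R * ‖x - y‖)) := by
          rw [Finset.sum_const, Finset.card_univ, Fintype.card_fin, nsmul_eq_mul]
  have hnd : (1 : ℝ) ≤ Real.sqrt ((n : ℝ) * d) := by
    rw [show (1:ℝ) = Real.sqrt 1 by simp]
    apply Real.sqrt_le_sqrt
    have hn1 : (1:ℝ) ≤ n := by exact_mod_cast hn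
    have hd1 : (1:ℝ) ≤ d := by exact_mod_cast hd
    nlinarith
  calc |afun A₁ A₂ x - afun A₁ A₂ y|
      ≤ (m : ℝ) * (Real.exp (R ^ 3) * (R * R * ‖x - y‖)) := key
    _ = R ^ 2 * (m : ℝ) * 1 * Real.exp (R ^ 3) * ‖x - y‖ := by ring
    _ ≤ R ^ 2 * (m : ℝ) * Real.sqrt ((n : ℝ) * d) * Real.exp (R ^ 3) * ‖x - y‖ := by
        apply mul_le_mul_of_nonneg_right _ (norm_nonneg _)
        apply mul_le_mul_of_nonneg_right _ (Real.exp_pos _).le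
        have h2 : 0 ≤ R ^ 2 * (m : ℝ) := by positivity
        nlinarith


end
end

section
/- Suppose ‖A₁‖ ≤ R, ‖A₂‖ ≤ R, ‖b‖₂ ≤ 1 and R > 4. Then for all x, y ∈ ℝ^d with ‖x‖₂ ≤ R and ‖y‖₂ ≤ R, ‖f(x) − f(y)‖₂ ≤ 2R² m^{3/2} √(nd) exp(4R³) · ‖x − y‖₂, and the same bound holds for ‖c(x) − c(y)‖₂. -/
open Matrix BigOperators

noncomputable section

variable {n m d : ℕ}

lemma aux_norm_le_sqrt_card_mul {k : ℕ} (z : EuclideanSpace ℝ (Fin k)) {c : ℝ} (hc : 0 ≤ c)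
    (h : ∀ i, |z i| ≤ c) : ‖z‖ ≤ Real.sqrt k * c := by
  rw [EuclideanSpace.norm_eq]
  have h1 : ∑ i, ‖z i‖ ^ 2 ≤ ∑ _i : Fin k, c ^ 2 := by
    apply Finset.sum_le_sum; intro i _
    have := h i
    rw [Real.norm_eq_abs]
    nlinarith [abs_nonneg (z i)]
  calc Real.sqrt (∑ i, ‖z i‖ ^ 2) ≤ Real.sqrt ((k : ℝ) * c ^ 2) := by
        apply Real.sqrt_le_sqrt; simpa using h1
    _ = Real.sqrt k * c := by
        rw [Real.sqrt_mul (by positivity), Real.sqrt_sq hc]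

lemma aux_abs_coord_le_norm {k : ℕ} (z : EuclideanSpace ℝ (Fin k)) (i : Fin k) : |z i| ≤ ‖z‖ := by
  rw [EuclideanSpace.norm_eq]
  have h1 : |z i| ^ 2 ≤ ∑ j, ‖z j‖ ^ 2 := by
    have := Finset.single_le_sum (f := fun j => ‖z j‖ ^ 2) (fun j _ => by positivity)
      (Finset.mem_univ i)
    simpa [Real.norm_eq_abs] using this
  calc |z i| = Real.sqrt (|z i| ^ 2) := (Real.sqrt_sq (abs_nonneg _)).symm
    _ ≤ _ := Real.sqrt_le_sqrt h1

lemma aux_norm_le_of_abs_le_mul {k : ℕ} (p q : EuclideanSpace ℝ (Fin k)) {K : ℝ} (hK : 0 ≤ K)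
    (h : ∀ i, |p i| ≤ K * |q i|) : ‖p‖ ≤ K * ‖q‖ := by
  rw [EuclideanSpace.norm_eq, EuclideanSpace.norm_eq]
  rw [← Real.sqrt_sq hK, ← Real.sqrt_mul (by positivity)]
  apply Real.sqrt_le_sqrt
  rw [Finset.mul_sum]
  apply Finset.sum_le_sum; intro i _
  have := h i
  simp only [Real.norm_eq_abs]
  nlinarith [abs_nonneg (p i), abs_nonneg (q i)]

lemma aux_sum_abs_le {k : ℕ} (z : EuclideanSpace ℝ (Fin k)) :
    ∑ i, |z i| ≤ Real.sqrt k * ‖z‖ := by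
  have h : (∑ i, |z i|) ^ 2 ≤ (k : ℝ) * ∑ i, |z i| ^ 2 := by
    simpa using sq_sum_le_card_mul_sum_sq (s := Finset.univ) (f := fun i => |z i|)
  have h2 : ∑ i, |z i| = Real.sqrt ((∑ i, |z i|) ^ 2) :=
    (Real.sqrt_sq (by positivity)).symm
  rw [h2, EuclideanSpace.norm_eq, ← Real.sqrt_mul (by positivity)]
  apply Real.sqrt_le_sqrt
  calc (∑ i, |z i|) ^ 2 ≤ (k : ℝ) * ∑ i, |z i| ^ 2 := h
    _ = (k : ℝ) * ∑ i, ‖z i‖ ^ 2 := by simp [Real.norm_eq_abs]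

lemma aux_norm_mulE_le {k l : ℕ} (A : Matrix (Fin k) (Fin l) ℝ) (x : EuclideanSpace ℝ (Fin l)) :
    ‖mulE A x‖ ≤ opNorm A * ‖x‖ := by
  have h : mulE A x = LinearMap.toContinuousLinearMap (Matrix.toEuclideanLin A) x := by
    ext i
    simp [mulE, Matrix.toEuclideanLin, Matrix.mulVec, dotProduct]
  rw [h]
  exact (LinearMap.toContinuousLinearMap (Matrix.toEuclideanLin A)).le_opNorm x

lemma aux_mulE_sub {k l : ℕ} (A : Matrix (Fin k) (Fin l) ℝ) (x y : EuclideanSpace ℝ (Fin l)) :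
    mulE A x - mulE A y = mulE A (x - y) := by
  ext i
  show (∑ j, A i j * x j) - (∑ j, A i j * y j) = ∑ j, A i j * (x j - y j)
  rw [← Finset.sum_sub_distrib]
  congr 1; funext j; ring

lemma aux_abs_exp_sub_exp_le {S a b : ℝ} (ha : a ≤ S) (hb : b ≤ S) :
    |Real.exp a - Real.exp b| ≤ Real.exp S * |a - b| := by
  wlog hab : b ≤ a generalizing a b
  · rw [abs_sub_comm, abs_sub_comm a]
    exact this hb ha (le_of_not_ge hab)
  have key := Real.add_one_le_exp (b - a)
  have hpos := Real.exp_pos a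
  have h1 : Real.exp a * (b - a + 1) ≤ Real.exp b := by
    calc Real.exp a * (b - a + 1) ≤ Real.exp a * Real.exp (b - a) := by nlinarith
      _ = Real.exp b := by rw [← Real.exp_add]; ring_nf
  have hmono : Real.exp b ≤ Real.exp a := Real.exp_le_exp.2 hab
  have hS' : Real.exp a ≤ Real.exp S := Real.exp_le_exp.2 ha
  rw [abs_of_nonneg (by linarith), abs_of_nonneg (by linarith : (0:ℝ) ≤ a - b)]
  nlinarith

lemma aux_arith {E D : ℝ} (hE1 : 1 ≤ E) (hD : 0 ≤ D) :
    E * E * D + E * E * E * E * D ≤ 2 * (E * E * E * E) * D := by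
  have hE0 : (0:ℝ) ≤ E := by linarith
  have hEE : (1:ℝ) ≤ E * E := by nlinarith
  have h5 : E * E ≤ E * E * E * E := by
    nlinarith [mul_nonneg (mul_nonneg hE0 hE0) (sub_nonneg.mpr hEE)]
  nlinarith [mul_le_mul_of_nonneg_right h5 hD]

set_option maxHeartbeats 1000000 in
lemma aux_softmax_lip {m : ℕ} (hm : 0 < m) {S : ℝ} (hS : 0 ≤ S)
    (v w : EuclideanSpace ℝ (Fin m)) (hv : ∀ i, |v i| ≤ S) (hw : ∀ i, |w i| ≤ S) :
    ‖(∑ i, Real.exp (v i))⁻¹ • vexp v - (∑ i, Real.exp (w i))⁻¹ • vexp w‖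
      ≤ 2 * Real.exp (4 * S) * ‖v - w‖ := by
  set αv := ∑ i, Real.exp (v i) with hαv
  set αw := ∑ i, Real.exp (w i) with hαw
  set E := Real.exp S with hE
  set M := (m : ℝ) with hM
  set D := ‖v - w‖ with hD
  have hE1 : (1:ℝ) ≤ E := Real.one_le_exp hS
  have hEpos : (0:ℝ) < E := by linarith
  have hM1 : (1:ℝ) ≤ M := by rw [hM]; exact_mod_cast hm
  have hsq : Real.sqrt M * Real.sqrt M = M := Real.mul_self_sqrt (by linarith)
  have hsq1 : (1:ℝ) ≤ Real.sqrt M := by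
    rw [show (1:ℝ) = Real.sqrt 1 by simp]
    exact Real.sqrt_le_sqrt hM1
  have hDpos : (0:ℝ) ≤ D := norm_nonneg _
  have hcoordv : ∀ i, Real.exp (-S) ≤ Real.exp (v i) ∧ Real.exp (v i) ≤ E := fun i =>
    ⟨Real.exp_le_exp.2 (by have := (abs_le.1 (hv i)).1; linarith),
     Real.exp_le_exp.2 (abs_le.1 (hv i)).2⟩
  have hcoordw : ∀ i, Real.exp (-S) ≤ Real.exp (w i) ∧ Real.exp (w i) ≤ E := fun i =>
    ⟨Real.exp_le_exp.2 (by have := (abs_le.1 (hw i)).1; linarith),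
     Real.exp_le_exp.2 (abs_le.1 (hw i)).2⟩
  have hexpnegS : Real.exp (-S) = E⁻¹ := by rw [Real.exp_neg]
  have hαv_lb : M * E⁻¹ ≤ αv := by
    rw [← hexpnegS]
    calc M * Real.exp (-S) = ∑ _i : Fin m, Real.exp (-S) := by
          simp [mul_comm, hM]
      _ ≤ αv := Finset.sum_le_sum fun i _ => (hcoordv i).1
  have hαw_lb : M * E⁻¹ ≤ αw := by
    rw [← hexpnegS]
    calc M * Real.exp (-S) = ∑ _i : Fin m, Real.exp (-S) := by
          simp [mul_comm, hM]
      _ ≤ αw := Finset.sum_le_sum fun i _ => (hcoordw i).1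
  have hMEpos : (0:ℝ) < M * E⁻¹ := by positivity
  have hαv_pos : (0:ℝ) < αv := lt_of_lt_of_le hMEpos hαv_lb
  have hαw_pos : (0:ℝ) < αw := lt_of_lt_of_le hMEpos hαw_lb
  have hαv_inv : αv⁻¹ ≤ E * M⁻¹ := by
    have := inv_anti₀ hMEpos hαv_lb
    rwa [mul_inv, inv_inv, mul_comm] at this
  have hαw_inv : αw⁻¹ ≤ E * M⁻¹ := by
    have := inv_anti₀ hMEpos hαw_lb
    rwa [mul_inv, inv_inv, mul_comm] at this
  -- norm of vexp difference
  have hd1 : ‖vexp v - vexp w‖ ≤ E * D := by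
    apply aux_norm_le_of_abs_le_mul _ _ (le_of_lt hEpos)
    intro i
    show |Real.exp (v i) - Real.exp (w i)| ≤ E * |v i - w i|
    exact aux_abs_exp_sub_exp_le (abs_le.1 (hv i)).2 (abs_le.1 (hw i)).2
  -- bound on |αv - αw|
  have hdα : |αv - αw| ≤ E * (Real.sqrt M * D) := by
    calc |αv - αw| = |∑ i, (Real.exp (v i) - Real.exp (w i))| := by
          rw [hαv, hαw, ← Finset.sum_sub_distrib]
      _ ≤ ∑ i, |Real.exp (v i) - Real.exp (w i)| := Finset.abs_sum_le_sum_abs _ _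
      _ ≤ ∑ i, E * |v i - w i| := Finset.sum_le_sum fun i _ =>
          aux_abs_exp_sub_exp_le (abs_le.1 (hv i)).2 (abs_le.1 (hw i)).2
      _ = E * ∑ i, |(v - w) i| := by rw [Finset.mul_sum]; rfl
      _ ≤ E * (Real.sqrt M * D) := by
          have := aux_sum_abs_le (v - w)
          have hEn : (0:ℝ) ≤ E := le_of_lt hEpos
          exact mul_le_mul_of_nonneg_left (by simpa [hM, hD] using this) hEn
  have huw : ‖vexp w‖ ≤ Real.sqrt M * E := by
    apply aux_norm_le_sqrt_card_mul _ (le_of_lt hEpos)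
    intro i
    show |Real.exp (w i)| ≤ E
    rw [abs_of_pos (Real.exp_pos _)]
    exact (hcoordw i).2
  have hdecomp : αv⁻¹ • vexp v - αw⁻¹ • vexp w
      = αv⁻¹ • (vexp v - vexp w) + (αv⁻¹ - αw⁻¹) • vexp w := by
    rw [smul_sub, sub_smul]; abel
  rw [hdecomp]
  have hinvdiff : |αv⁻¹ - αw⁻¹| ≤ (E * (Real.sqrt M * D)) * ((E * M⁻¹) * (E * M⁻¹)) := by
    have hne1 : αv ≠ 0 := ne_of_gt hαv_pos
    have hne2 : αw ≠ 0 := ne_of_gt hαw_pos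
    have heq : αv⁻¹ - αw⁻¹ = (αw - αv) * (αv⁻¹ * αw⁻¹) := by
      have e1 : αw * (αv⁻¹ * αw⁻¹) = αv⁻¹ := by
        rw [mul_comm αv⁻¹ αw⁻¹, ← mul_assoc, mul_inv_cancel₀ hne2, one_mul]
      have e2 : αv * (αv⁻¹ * αw⁻¹) = αw⁻¹ := by
        rw [← mul_assoc, mul_inv_cancel₀ hne1, one_mul]
      rw [sub_mul, e1, e2]
    rw [heq, abs_mul, abs_mul]
    have h1 : |αw - αv| ≤ E * (Real.sqrt M * D) := by rwa [abs_sub_comm] at hdα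
    have h2 : |αv⁻¹| = αv⁻¹ := abs_of_pos (inv_pos.mpr hαv_pos)
    have h3 : |αw⁻¹| = αw⁻¹ := abs_of_pos (inv_pos.mpr hαw_pos)
    rw [h2, h3]
    apply mul_le_mul h1 (mul_le_mul hαv_inv hαw_inv (le_of_lt (inv_pos.mpr hαw_pos))
        (by positivity))
      (mul_nonneg (le_of_lt (inv_pos.mpr hαv_pos)) (le_of_lt (inv_pos.mpr hαw_pos)))
      (by positivity)
  have hE4 : Real.exp (4 * S) = E * E * E * E := by
    rw [hE, ← Real.exp_add, ← Real.exp_add, ← Real.exp_add]; ring_nf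
  have t1 : ‖αv⁻¹ • (vexp v - vexp w)‖ ≤ E * E * D := by
    rw [norm_smul, Real.norm_eq_abs, abs_of_pos (inv_pos.mpr hαv_pos)]
    have hαvE : αv⁻¹ ≤ E := le_trans hαv_inv (by
      have : E * M⁻¹ ≤ E * 1 := by
        apply mul_le_mul_of_nonneg_left _ (le_of_lt hEpos)
        rw [inv_le_one_iff₀]; right; exact hM1
      simpa using this)
    calc αv⁻¹ * ‖vexp v - vexp w‖ ≤ E * (E * D) :=
          mul_le_mul hαvE hd1 (norm_nonneg _) (le_of_lt hEpos)
      _ = E * E * D := by ring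
  have t2 : ‖(αv⁻¹ - αw⁻¹) • vexp w‖ ≤ E * E * E * E * D := by
    rw [norm_smul, Real.norm_eq_abs]
    calc |αv⁻¹ - αw⁻¹| * ‖vexp w‖
        ≤ ((E * (Real.sqrt M * D)) * ((E * M⁻¹) * (E * M⁻¹))) * (Real.sqrt M * E) :=
          mul_le_mul hinvdiff huw (norm_nonneg _) (by positivity)
      _ = E * E * E * E * D * (Real.sqrt M * Real.sqrt M * M⁻¹ * M⁻¹) := by ring
      _ = E * E * E * E * D * M⁻¹ := by rw [hsq]; field_simp
      _ ≤ E * E * E * E * D * 1 := by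
          apply mul_le_mul_of_nonneg_left _ (by positivity)
          rw [inv_le_one_iff₀]; right; exact hM1
      _ = E * E * E * E * D := by ring
  calc ‖αv⁻¹ • (vexp v - vexp w) + (αv⁻¹ - αw⁻¹) • vexp w‖
      ≤ ‖αv⁻¹ • (vexp v - vexp w)‖ + ‖(αv⁻¹ - αw⁻¹) • vexp w‖ := norm_add_le _ _
    _ ≤ E * E * D + E * E * E * E * D := add_le_add t1 t2
    _ ≤ 2 * Real.exp (4 * S) * D := by
        rw [hE4]; exact aux_arith hE1 hDpos

lemma aux_relu_norm_le {k : ℕ} (z : EuclideanSpace ℝ (Fin k)) : ‖relu z‖ ≤ ‖z‖ := by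
  have := aux_norm_le_of_abs_le_mul (relu z) z (by norm_num : (0:ℝ) ≤ 1) (fun i => by
    show |max 0 (z i)| ≤ 1 * |z i|
    rw [one_mul, abs_of_nonneg (le_max_left _ _)]
    rcases le_or_gt (z i) 0 with h | h
    · simp [max_eq_left h, abs_nonneg]
    · rw [max_eq_right h.le, abs_of_pos h]
  )
  simpa using this

lemma aux_relu_lip {k : ℕ} (a c : EuclideanSpace ℝ (Fin k)) : ‖relu a - relu c‖ ≤ ‖a - c‖ := by
  have := aux_norm_le_of_abs_le_mul (relu a - relu c) (a - c) (by norm_num : (0:ℝ) ≤ 1) (fun i => by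
    show |max 0 (a i) - max 0 (c i)| ≤ 1 * |(a - c) i|
    rw [one_mul]
    have h1 : (a - c) i = a i - c i := rfl
    rw [h1, max_comm 0 (a i), max_comm 0 (c i)]
    exact abs_max_sub_max_le_abs _ _ _
  )
  simpa using this

/-- if ‖A₁‖ ≤ R, ‖A₂‖ ≤ R, ‖b‖₂ ≤ 1 and R > 4, then for all x, y in the
radius-R ball, ‖f(x) − f(y)‖₂ ≤ 2R² m^{3/2} √(nd) exp(4R³) ‖x − y‖₂, and the same
bound holds for ‖c(x) − c(y)‖₂. -/
theorem statement9 (n m d : ℕ) (hn : 0 < n) (hm : 0 < m) (hd : 0 < d) (R : ℝ)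
    (A₁ : Matrix (Fin n) (Fin d) ℝ) (A₂ : Matrix (Fin m) (Fin n) ℝ)
    (b : EuclideanSpace ℝ (Fin m))
    (hA₁ : opNorm A₁ ≤ R) (hA₂ : opNorm A₂ ≤ R) (hb : ‖b‖ ≤ 1) (hR : 4 < R) :
    ∀ x y : EuclideanSpace ℝ (Fin d), ‖x‖ ≤ R → ‖y‖ ≤ R →
      ‖ffun A₁ A₂ x - ffun A₁ A₂ y‖ ≤
        2 * R ^ 2 * ((m : ℝ) * Real.sqrt m) * Real.sqrt ((n : ℝ) * d)
          * Real.exp (4 * R ^ 3) * ‖x - y‖ ∧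
      ‖cfun A₁ A₂ b x - cfun A₁ A₂ b y‖ ≤
        2 * R ^ 2 * ((m : ℝ) * Real.sqrt m) * Real.sqrt ((n : ℝ) * d)
          * Real.exp (4 * R ^ 3) * ‖x - y‖ := by
  intro x y hx hy
  have hR0 : (0:ℝ) < R := by linarith
  -- coordinate bounds on v(z) := A₂ h(z)
  have hcoord : ∀ z : EuclideanSpace ℝ (Fin d), ‖z‖ ≤ R →
      ∀ i, |mulE A₂ (hfun A₁ z) i| ≤ R ^ 3 := by
    intro z hz i
    have h1 : ‖mulE A₂ (hfun A₁ z)‖ ≤ R * (R * R) := by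
      calc ‖mulE A₂ (hfun A₁ z)‖ ≤ opNorm A₂ * ‖hfun A₁ z‖ := aux_norm_mulE_le _ _
        _ ≤ R * (R * R) := by
            apply mul_le_mul hA₂ _ (norm_nonneg _) hR0.le
            calc ‖hfun A₁ z‖ ≤ ‖mulE A₁ z‖ := aux_relu_norm_le _
              _ ≤ opNorm A₁ * ‖z‖ := aux_norm_mulE_le _ _
              _ ≤ R * R := mul_le_mul hA₁ hz (norm_nonneg _) hR0.le
    calc |mulE A₂ (hfun A₁ z) i| ≤ ‖mulE A₂ (hfun A₁ z)‖ := aux_abs_coord_le_norm _ i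
      _ ≤ R * (R * R) := h1
      _ = R ^ 3 := by ring
  -- Lipschitz bound on v
  have hvlip : ‖mulE A₂ (hfun A₁ x) - mulE A₂ (hfun A₁ y)‖ ≤ R ^ 2 * ‖x - y‖ := by
    rw [aux_mulE_sub]
    calc ‖mulE A₂ (hfun A₁ x - hfun A₁ y)‖ ≤ opNorm A₂ * ‖hfun A₁ x - hfun A₁ y‖ :=
          aux_norm_mulE_le _ _
      _ ≤ R * (R * ‖x - y‖) := by
          apply mul_le_mul hA₂ _ (norm_nonneg _) hR0.le
          calc ‖hfun A₁ x - hfun A₁ y‖ ≤ ‖mulE A₁ x - mulE A₁ y‖ := aux_relu_lip _ _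
            _ = ‖mulE A₁ (x - y)‖ := by rw [aux_mulE_sub]
            _ ≤ opNorm A₁ * ‖x - y‖ := aux_norm_mulE_le _ _
            _ ≤ R * ‖x - y‖ := mul_le_mul_of_nonneg_right hA₁ (norm_nonneg _)
      _ = R ^ 2 * ‖x - y‖ := by ring
  -- rewrite ffun as softmax
  have hfx : ffun A₁ A₂ x = (∑ i, Real.exp (mulE A₂ (hfun A₁ x) i))⁻¹ •
      vexp (mulE A₂ (hfun A₁ x)) := rfl
  have hfy : ffun A₁ A₂ y = (∑ i, Real.exp (mulE A₂ (hfun A₁ y) i))⁻¹ •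
      vexp (mulE A₂ (hfun A₁ y)) := rfl
  have hmain : ‖ffun A₁ A₂ x - ffun A₁ A₂ y‖ ≤
      2 * R ^ 2 * ((m : ℝ) * Real.sqrt m) * Real.sqrt ((n : ℝ) * d)
        * Real.exp (4 * R ^ 3) * ‖x - y‖ := by
    have hsm := aux_softmax_lip hm (by positivity : (0:ℝ) ≤ R ^ 3)
      (mulE A₂ (hfun A₁ x)) (mulE A₂ (hfun A₁ y)) (hcoord x hx) (hcoord y hy)
    rw [hfx, hfy]
    have step1 : ‖(∑ i, Real.exp (mulE A₂ (hfun A₁ x) i))⁻¹ • vexp (mulE A₂ (hfun A₁ x)) -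
        (∑ i, Real.exp (mulE A₂ (hfun A₁ y) i))⁻¹ • vexp (mulE A₂ (hfun A₁ y))‖
        ≤ 2 * Real.exp (4 * R ^ 3) * (R ^ 2 * ‖x - y‖) := by
      calc _ ≤ 2 * Real.exp (4 * R ^ 3) * ‖mulE A₂ (hfun A₁ x) - mulE A₂ (hfun A₁ y)‖ := hsm
        _ ≤ 2 * Real.exp (4 * R ^ 3) * (R ^ 2 * ‖x - y‖) :=
            mul_le_mul_of_nonneg_left hvlip (by positivity)
    refine le_trans step1 ?_
    have h1m : (1:ℝ) ≤ (m : ℝ) := by exact_mod_cast hm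
    have h1sm : (1:ℝ) ≤ Real.sqrt m := by
      rw [show (1:ℝ) = Real.sqrt 1 by simp]; exact Real.sqrt_le_sqrt h1m
    have h1nd : (1:ℝ) ≤ Real.sqrt ((n : ℝ) * d) := by
      rw [show (1:ℝ) = Real.sqrt 1 by simp]
      apply Real.sqrt_le_sqrt
      have h1n : (1:ℝ) ≤ (n : ℝ) := by exact_mod_cast hn
      have h1d : (1:ℝ) ≤ (d : ℝ) := by exact_mod_cast hd
      nlinarith
    have h2 : (1:ℝ) ≤ (m : ℝ) * Real.sqrt m := by nlinarith
    have hkey : (1:ℝ) ≤ ((m : ℝ) * Real.sqrt m) * Real.sqrt ((n : ℝ) * d) := by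
      have := mul_le_mul h2 h1nd zero_le_one (le_trans zero_le_one h2)
      simpa using this
    have hnn : (0:ℝ) ≤ 2 * Real.exp (4 * R ^ 3) * (R ^ 2 * ‖x - y‖) := by positivity
    calc 2 * Real.exp (4 * R ^ 3) * (R ^ 2 * ‖x - y‖)
        = (2 * Real.exp (4 * R ^ 3) * (R ^ 2 * ‖x - y‖)) * 1 := by ring
      _ ≤ (2 * Real.exp (4 * R ^ 3) * (R ^ 2 * ‖x - y‖)) *
          (((m : ℝ) * Real.sqrt m) * Real.sqrt ((n : ℝ) * d)) :=
            mul_le_mul_of_nonneg_left hkey hnn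
      _ = 2 * R ^ 2 * ((m : ℝ) * Real.sqrt m) * Real.sqrt ((n : ℝ) * d)
          * Real.exp (4 * R ^ 3) * ‖x - y‖ := by ring
  refine ⟨hmain, ?_⟩
  have hc : cfun A₁ A₂ b x - cfun A₁ A₂ b y = ffun A₁ A₂ x - ffun A₁ A₂ y := by
    simp [cfun, sub_sub_sub_cancel_right]
  rw [hc]; exact hmain


end
end
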